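/- If μ > 0, then for every nonzero real x one has |exp_μ(ix)| < 1. -/

import Mathlib

open Finset

/-- The μ-deformed factorial function γ_μ. -/
noncomputable def gammaMu (μ : ℝ) : ℕ → ℝ
  | 0 => 1
  | n + 1 => ((n + 1 : ℝ) + 2 * μ * (if Odd (n + 1) then 1 else 0)) * gammaMu μ n

/-- The μ-deformed binomial coefficient C_μ(n,k), zero outside 0 ≤ k ≤ n. -/
noncomputable def binomMu (μ : ℝ) (n : ℕ) (k : ℤ) : ℝ :=
  if 0 ≤ k ∧ k ≤ (n : ℤ) then gammaMu μ n / (gammaMu μ (n - k.toNat) * gammaMu μ k.toNat) else 0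

/-- The n-th μ-deformed binomial polynomial p_{n,μ}(x,y). -/
noncomputable def pMu (μ : ℝ) (n : ℕ) (x y : ℂ) : ℂ :=
  ∑ k ∈ Finset.range (n + 1), (binomMu μ n k : ℂ) * x ^ k * y ^ (n - k)

/-- The μ-deformed exponential function. -/
noncomputable def expMu (μ : ℝ) (z : ℂ) : ℂ :=
  ∑' n : ℕ, z ^ n / (gammaMu μ n : ℂ)

/-- The Bessel function of the first kind of order ν, for positive real argument. -/
noncomputable def besselJ (ν x : ℝ) : ℝ :=
  ∑' m : ℕ, ((-1) ^ m / (Nat.factorial m * Real.Gamma (ν + m + 1))) * (x / 2) ^ ((2 * m : ℝ) + ν)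

/-!
Splitting the series into even and odd terms gives `expMu μ (I x) = cosMu μ x + I sinMu μ x` with
real power series (for `μ = 0`, `cos` and `sin`), and `sinMu μ x = x sincMu μ x`. The recursion of
`γ_μ` gives `cosMu' = -sinMu` and `sinMu' = cosMu - 2μ sincMu`, so the energy
`cosMu² + sinMu²` has derivative `-4μ x sincMu²`. It is therefore nonincreasing on `[0, ∞)`, and
strictly decreasing near `0` because `sincMu μ 0 = 1 / (1 + 2μ) > 0`; as it equals `1` at `0`, it
is `< 1` for `x > 0`. The case `x < 0` follows by complex conjugation, the coefficients being real.
-/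

open Filter Topology Nat

theorem lt_of_hasDerivAt_nonpos_of_eventually_neg {f f' : ℝ → ℝ} {a x : ℝ}
    (hf : ∀ y, HasDerivAt f (f' y) y) (hf'_nonpos : ∀ y, a < y → f' y ≤ 0)
    (hf'_neg : ∀ᶠ y in 𝓝[>] a, f' y < 0) (hx : a < x) : f x < f a := by
  obtain ⟨u, hau, hu⟩ := mem_nhdsGT_iff_exists_Ioo_subset.1 hf'_neg
  set c := min u x
  have hac : a < c := lt_min hau hx
  have hcont : Continuous f := continuous_iff_continuousAt.2 fun y => (hf y).continuousAt
  have hfc : f c < f a := by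
    refine strictAntiOn_of_deriv_neg (convex_Icc a c) hcont.continuousOn (fun y hy => ?_)
      (Set.left_mem_Icc.2 hac.le) (Set.right_mem_Icc.2 hac.le) hac
    rw [interior_Icc] at hy
    rw [(hf y).deriv]
    exact hu ⟨hy.1, hy.2.trans_le (min_le_left u x)⟩
  have hfx : f x ≤ f c := by
    refine antitoneOn_of_deriv_nonpos (convex_Ici a) hcont.continuousOn
      (fun y _ => (hf y).differentiableAt.differentiableWithinAt) (fun y hy => ?_)
      (Set.mem_Ici.2 hac.le) (Set.mem_Ici.2 hx.le) (min_le_right u x)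
    rw [interior_Ici] at hy
    rw [(hf y).deriv]
    exact hf'_nonpos y hy
  exact hfx.trans_lt hfc

theorem summable_mul_pow {c : ℕ → ℝ} {e : ℕ → ℕ} (he : Function.Injective e)
    (hc : ∀ k, |c k| ≤ ((e k)! : ℝ)⁻¹) (y : ℝ) : Summable fun k => c k * y ^ e k := by
  refine ((Real.summable_pow_div_factorial |y|).comp_injective he).of_norm_bounded fun k => ?_
  rw [norm_mul, norm_pow, Real.norm_eq_abs, Real.norm_eq_abs, Function.comp_apply, div_eq_inv_mul]
  gcongr
  exact hc k

theorem natCast_mul_abs_pow_sub_one_le {y M : ℝ} (hy : |y| ≤ M) (hM : 1 ≤ M) (n : ℕ) :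
    n * |y| ^ (n - 1) ≤ (2 * M) ^ n := by
  calc n * |y| ^ (n - 1) ≤ 2 ^ n * M ^ n := by
        gcongr
        · exact_mod_cast n.lt_two_pow_self.le
        · exact (pow_le_pow_left₀ (abs_nonneg y) hy _).trans (pow_le_pow_right₀ hM (n.sub_le 1))
    _ = (2 * M) ^ n := (mul_pow 2 M n).symm

theorem hasDerivAt_tsum_mul_pow {c : ℕ → ℝ} {e : ℕ → ℕ} (he : Function.Injective e)
    (hc : ∀ k, |c k| ≤ ((e k)! : ℝ)⁻¹) (x : ℝ) :
    HasDerivAt (fun y => ∑' k, c k * y ^ e k) (∑' k, c k * e k * x ^ (e k - 1)) x := by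
  set M := |x| + 1
  have hM : 1 ≤ M := le_add_of_nonneg_left (abs_nonneg x)
  have hx : x ∈ Metric.ball (0 : ℝ) M := by simp [M]
  have hu : Summable fun k => (2 * M) ^ e k / ((e k)! : ℝ) :=
    (Real.summable_pow_div_factorial _).comp_injective he
  refine hasDerivAt_tsum_of_isPreconnected (g := fun k y => c k * y ^ e k)
    (g' := fun k y => c k * e k * y ^ (e k - 1)) hu Metric.isOpen_ball
    (convex_ball 0 M).isPreconnected (fun k y _ => ?_) (fun k y hy => ?_)
    hx (summable_mul_pow he hc x) hx
  · simpa only [mul_assoc] using (hasDerivAt_pow (e k) y).const_mul (c k)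
  · have hyM : |y| ≤ M := by simpa using (Metric.mem_ball.1 hy).le
    rw [norm_mul, norm_mul, norm_pow, Real.norm_eq_abs, Real.norm_eq_abs, Real.norm_eq_abs,
      Nat.abs_cast, mul_assoc, div_eq_inv_mul]
    gcongr
    · exact hc k
    · exact natCast_mul_abs_pow_sub_one_le hyM hM (e k)

theorem gammaMu_two_mul_add_one (μ : ℝ) (k : ℕ) :
    gammaMu μ (2 * k + 1) = (2 * k + 1 + 2 * μ) * gammaMu μ (2 * k) := by
  simp [gammaMu]

theorem gammaMu_two_mul_add_two (μ : ℝ) (k : ℕ) :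
    gammaMu μ (2 * k + 2) = (2 * k + 2) * gammaMu μ (2 * k + 1) := by
  have : ¬Odd (2 * k + 1 + 1) := by simp [parity_simps]
  rw [gammaMu, if_neg this]
  push_cast
  ring

theorem gammaMu_pos {μ : ℝ} (hμ : -1 / 2 < μ) : ∀ n, 0 < gammaMu μ n
  | 0 => by simp [gammaMu]
  | n + 1 => by
    have hfactor : 0 < (n + 1 : ℝ) + 2 * μ * (if Odd (n + 1) then 1 else 0) := by
      split_ifs <;> linarith [(n.cast_nonneg : (0 : ℝ) ≤ n)]
    exact mul_pos hfactor (gammaMu_pos hμ n)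

theorem factorial_le_gammaMu {μ : ℝ} (hμ : 0 ≤ μ) : ∀ n, (n ! : ℝ) ≤ gammaMu μ n
  | 0 => by simp [gammaMu]
  | n + 1 => by
    rw [factorial_succ, cast_mul, gammaMu]
    gcongr
    · push_cast
      split_ifs <;> linarith
    · exact factorial_le_gammaMu hμ n

theorem abs_neg_one_pow_div_gammaMu_le {μ : ℝ} (hμ : 0 ≤ μ) (k n : ℕ) :
    |(-1) ^ k / gammaMu μ n| ≤ (n ! : ℝ)⁻¹ := by
  rw [abs_div, abs_pow, abs_neg, abs_one, one_pow, one_div,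
    abs_of_pos (gammaMu_pos (by linarith) n)]
  exact inv_anti₀ (by positivity) (factorial_le_gammaMu hμ n)

noncomputable def cosMu (μ x : ℝ) : ℝ := ∑' k : ℕ, (-1) ^ k / gammaMu μ (2 * k) * x ^ (2 * k)

noncomputable def sinMu (μ x : ℝ) : ℝ :=
  ∑' k : ℕ, (-1) ^ k / gammaMu μ (2 * k + 1) * x ^ (2 * k + 1)

noncomputable def sincMu (μ x : ℝ) : ℝ := ∑' k : ℕ, (-1) ^ k / gammaMu μ (2 * k + 1) * x ^ (2 * k)

theorem sinMu_eq_mul_sincMu (μ x : ℝ) : sinMu μ x = x * sincMu μ x := by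
  rw [sinMu, sincMu, ← tsum_mul_left]
  congr 1 with k
  ring

section

variable {μ : ℝ} (hμ : 0 ≤ μ)
include hμ

theorem abs_neg_one_pow_div_gammaMu_two_mul_add_one_le (k : ℕ) :
    |(-1) ^ k / gammaMu μ (2 * k + 1)| ≤ ((2 * k)! : ℝ)⁻¹ :=
  (abs_neg_one_pow_div_gammaMu_le hμ k _).trans <|
    inv_anti₀ (by positivity) (by exact_mod_cast factorial_le (2 * k).le_succ)

theorem summable_cosMu (x : ℝ) :
    Summable fun k : ℕ => (-1) ^ k / gammaMu μ (2 * k) * x ^ (2 * k) :=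
  summable_mul_pow (e := (2 * ·)) (fun _ _ h => by simpa using h)
    (fun k => abs_neg_one_pow_div_gammaMu_le hμ k _) x

theorem summable_sinMu (x : ℝ) :
    Summable fun k : ℕ => (-1) ^ k / gammaMu μ (2 * k + 1) * x ^ (2 * k + 1) :=
  summable_mul_pow (e := (2 * · + 1)) (fun _ _ h => by simpa using h)
    (fun k => abs_neg_one_pow_div_gammaMu_le hμ k _) x

theorem summable_sincMu (x : ℝ) :
    Summable fun k : ℕ => (-1) ^ k / gammaMu μ (2 * k + 1) * x ^ (2 * k) :=
  summable_mul_pow (e := (2 * ·)) (fun _ _ h => by simpa using h)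
    (abs_neg_one_pow_div_gammaMu_two_mul_add_one_le hμ) x

theorem hasDerivAt_sinMu (x : ℝ) : HasDerivAt (sinMu μ) (cosMu μ x - 2 * μ * sincMu μ x) x := by
  refine (hasDerivAt_tsum_mul_pow (e := (2 * · + 1)) (fun _ _ h => by simpa using h)
    (fun k => abs_neg_one_pow_div_gammaMu_le hμ k _) x).congr_deriv ?_
  rw [cosMu, sincMu, ← tsum_mul_left,
    ← (summable_cosMu hμ x).tsum_sub ((summable_sincMu hμ x).mul_left _)]
  congr 1 with k
  have hγ : gammaMu μ (2 * k) ≠ 0 := (gammaMu_pos (by linarith) _).ne'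
  have hfactor : (2 * k + 1 + 2 * μ : ℝ) ≠ 0 := by positivity
  rw [gammaMu_two_mul_add_one]
  push_cast
  field_simp
  ring

theorem hasDerivAt_cosMu (x : ℝ) : HasDerivAt (cosMu μ) (-sinMu μ x) x := by
  refine (hasDerivAt_tsum_mul_pow (e := (2 * ·)) (fun _ _ h => by simpa using h)
    (fun k => abs_neg_one_pow_div_gammaMu_le hμ k _) x).congr_deriv ?_
  have hshift : ∀ k : ℕ, (-1) ^ (k + 1) / gammaMu μ (2 * (k + 1)) * ((2 * (k + 1) : ℕ) : ℝ) *
      x ^ (2 * (k + 1) - 1) = -((-1) ^ k / gammaMu μ (2 * k + 1) * x ^ (2 * k + 1)) := by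
    intro k
    rw [show 2 * (k + 1) = 2 * k + 2 by ring, gammaMu_two_mul_add_two,
      show 2 * k + 2 - 1 = 2 * k + 1 by omega]
    have hγ : gammaMu μ (2 * k + 1) ≠ 0 := (gammaMu_pos (by linarith) _).ne'
    push_cast
    field_simp
    ring
  rw [tsum_eq_zero_add' (by simpa only [hshift] using (summable_sinMu hμ x).neg)]
  simp only [hshift, tsum_neg, sinMu]
  simp

theorem continuous_sincMu : Continuous (sincMu μ) :=
  continuous_iff_continuousAt.2 fun x =>
    (hasDerivAt_tsum_mul_pow (e := (2 * ·)) (fun _ _ h => by simpa using h)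
      (abs_neg_one_pow_div_gammaMu_two_mul_add_one_le hμ) x).continuousAt

end

theorem cosMu_zero (μ : ℝ) : cosMu μ 0 = 1 := by
  rw [cosMu, tsum_eq_single 0 fun k hk => by simp [hk]]
  simp [gammaMu]

theorem sinMu_zero (μ : ℝ) : sinMu μ 0 = 0 := by
  simp [sinMu_eq_mul_sincMu]

theorem sincMu_zero (μ : ℝ) : sincMu μ 0 = (1 + 2 * μ)⁻¹ := by
  rw [sincMu, tsum_eq_single 0 fun k hk => by simp [hk]]
  simp [gammaMu]

theorem hasDerivAt_cosMu_sq_add_sinMu_sq {μ : ℝ} (hμ : 0 ≤ μ) (x : ℝ) :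
    HasDerivAt (fun y => cosMu μ y ^ 2 + sinMu μ y ^ 2) (-(4 * μ * x * sincMu μ x ^ 2)) x := by
  refine (((hasDerivAt_cosMu hμ x).pow 2).add ((hasDerivAt_sinMu hμ x).pow 2)).congr_deriv ?_
  rw [sinMu_eq_mul_sincMu]
  ring

theorem cosMu_sq_add_sinMu_sq_lt_one {μ : ℝ} (hμ : 0 < μ) {x : ℝ} (hx : 0 < x) :
    cosMu μ x ^ 2 + sinMu μ x ^ 2 < 1 := by
  have hsinc : ∀ᶠ y in 𝓝 0, 0 < sincMu μ y :=
    continuousAt_const.eventually_lt (continuous_sincMu hμ.le).continuousAt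
      (by rw [sincMu_zero]; exact inv_pos.2 (by linarith))
  have hneg : ∀ᶠ y in 𝓝[>] 0, -(4 * μ * y * sincMu μ y ^ 2) < 0 := by
    filter_upwards [nhdsWithin_le_nhds hsinc, self_mem_nhdsWithin] with y hs (hy : 0 < y)
    exact neg_neg_of_pos (by positivity)
  have h := lt_of_hasDerivAt_nonpos_of_eventually_neg (hasDerivAt_cosMu_sq_add_sinMu_sq hμ.le)
    (fun y (hy : 0 < y) => neg_nonpos.2 (by positivity)) hneg hx
  simpa [cosMu_zero, sinMu_zero] using h

theorem summable_expMu {μ : ℝ} (hμ : 0 ≤ μ) (z : ℂ) :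
    Summable fun n => z ^ n / (gammaMu μ n : ℂ) := by
  refine (Real.summable_pow_div_factorial ‖z‖).of_norm_bounded fun n => ?_
  rw [norm_div, norm_pow, Complex.norm_real, Real.norm_eq_abs,
    abs_of_pos (gammaMu_pos (by linarith) n)]
  gcongr
  exact factorial_le_gammaMu hμ n

theorem expMu_I_mul {μ : ℝ} (hμ : 0 ≤ μ) (x : ℝ) :
    expMu μ (Complex.I * x) = cosMu μ x + sinMu μ x * Complex.I := by
  have hsum := summable_expMu hμ (Complex.I * x)
  have heven : ∀ k : ℕ, (Complex.I * x) ^ (2 * k) / (gammaMu μ (2 * k) : ℂ) =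
      (((-1) ^ k / gammaMu μ (2 * k) * x ^ (2 * k) : ℝ) : ℂ) := by
    intro k
    rw [mul_pow, pow_mul, Complex.I_sq]
    push_cast
    ring
  have hodd : ∀ k : ℕ, (Complex.I * x) ^ (2 * k + 1) / (gammaMu μ (2 * k + 1) : ℂ) =
      (((-1) ^ k / gammaMu μ (2 * k + 1) * x ^ (2 * k + 1) : ℝ) : ℂ) * Complex.I := by
    intro k
    rw [mul_pow, pow_succ, pow_mul, Complex.I_sq]
    push_cast
    ring
  rw [expMu, ← tsum_even_add_odd (f := fun n => (Complex.I * x) ^ n / (gammaMu μ n : ℂ))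
    (hsum.comp_injective fun _ _ h => by simpa using h)
    (hsum.comp_injective fun _ _ h => by simpa using h)]
  simp only [heven, hodd]
  rw [tsum_mul_right, ← Complex.ofReal_tsum, ← Complex.ofReal_tsum, cosMu, sinMu]

theorem expMu_conj (μ : ℝ) (z : ℂ) : expMu μ (starRingEnd ℂ z) = starRingEnd ℂ (expMu μ z) := by
  simp [expMu, Complex.conj_tsum]

theorem abs_expMu_lt_one (μ : ℝ) (hμ : 0 < μ) (x : ℝ) (hx : x ≠ 0) :
    ‖expMu μ (Complex.I * x)‖ < 1 := by
  wlog hx_pos : 0 < x generalizing x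
  · have h := this (-x) (neg_ne_zero.2 hx) (by grind)
    rwa [show Complex.I * ((-x : ℝ) : ℂ) = starRingEnd ℂ (Complex.I * x) by simp, expMu_conj,
      Complex.norm_conj] at h
  rw [expMu_I_mul hμ.le, Complex.norm_add_mul_I, Real.sqrt_lt' one_pos, one_pow]
  exact cosMu_sq_add_sinMu_sq_lt_one hμ hx_pos
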